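/- For every integer s ≥ 2, with N = s(s+1) and t = 2s: there exists an (N, s+2, t)-suitable core, and for every integer w ≥ s+3 there is no (N, w, t)-suitable core. (Equivalently, SCN(2s, s(s+1)) = s+2 for all s ≥ 2.) -/
import Mathlib


/-- An `(N, w, t)`-suitable core: an `N × w` array whose rows are permutations of `{1,…,w}`
(row `i`, position `j` holds symbol `C i j`) such that for each `s` with `0 ≤ s ≤ t−1`,
each symbol precedes each set of `s` other symbols in at least `t − s` rows. -/
def IsSuitableCore (N w t : ℕ) (C : Fin N → Equiv.Perm (Fin w)) : Prop :=
  ∀ (σ : Fin w) (T : Finset (Fin w)), σ ∉ T → T.card < t →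
    t - T.card ≤ (Finset.univ.filter fun i : Fin N =>
      ∀ τ ∈ T, (C i).symm σ < (C i).symm τ).card

def SuitableCoreExists (N w t : ℕ) : Prop :=
  ∃ C : Fin N → Equiv.Perm (Fin w), IsSuitableCore N w t C

open Finset

lemma filter_card_equiv {α β : Type*} [Fintype α] [Fintype β] [DecidableEq β]
    (e : α ≃ β) (P : β → Prop) [DecidablePred P] :
    ((univ : Finset α).filter fun a => P (e a)).card
      = ((univ : Finset β).filter P).card := by
  apply Finset.card_bij (fun a _ => e a)
  · intro a ha; simp only [mem_filter, mem_univ, true_and] at ha ⊢; exact ha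
  · intro a _ b _ h; exact e.injective h
  · intro b hb
    refine ⟨e.symm b, ?_, by simp⟩
    simp only [mem_filter, mem_univ, true_and, Equiv.apply_symm_apply] at hb ⊢
    exact hb

lemma two_images_le {α β γ : Type*} [DecidableEq γ] (D1 : Finset α) (D2 : Finset β)
    (φ1 : α → γ) (φ2 : β → γ) (F : Finset γ)
    (h1 : ∀ a ∈ D1, φ1 a ∈ F) (h2 : ∀ b ∈ D2, φ2 b ∈ F)
    (i1 : Set.InjOn φ1 D1) (i2 : Set.InjOn φ2 D2)
    (hd : ∀ a ∈ D1, ∀ b ∈ D2, φ1 a ≠ φ2 b) :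
    D1.card + D2.card ≤ F.card := by
  have hsub : D1.image φ1 ∪ D2.image φ2 ⊆ F := by
    intro x hx
    rcases mem_union.1 hx with h | h
    · obtain ⟨a, ha, rfl⟩ := mem_image.1 h; exact h1 a ha
    · obtain ⟨b, hb, rfl⟩ := mem_image.1 h; exact h2 b hb
  have hdis : Disjoint (D1.image φ1) (D2.image φ2) := by
    rw [disjoint_left]
    rintro x hx1 hx2
    obtain ⟨a, ha, rfl⟩ := mem_image.1 hx1
    obtain ⟨b, hb, hba⟩ := mem_image.1 hx2
    exact hd a ha b hb hba.symm
  calc D1.card + D2.card = (D1.image φ1).card + (D2.image φ2).card := by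
        rw [card_image_of_injOn i1, card_image_of_injOn i2]
    _ = (D1.image φ1 ∪ D2.image φ2).card := (card_union_of_disjoint hdis).symm
    _ ≤ F.card := card_le_card hsub

def nu (s : ℕ) (j : Fin s) : Fin (s+2) := ⟨j.1, by omega⟩

abbrev RI (s : ℕ) := {p : Fin (s+2) × Fin s // p.1 ≠ nu s p.2}

lemma card_RI (s : ℕ) : Fintype.card (RI s) = s * (s+1) := by
  have h1 : Fintype.card {p : Fin (s+2) × Fin s // p.1 = nu s p.2} = s := by
    have e : {p : Fin (s+2) × Fin s // p.1 = nu s p.2} ≃ Fin s :=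
      { toFun := fun p => p.1.2
        invFun := fun j => ⟨(nu s j, j), rfl⟩
        left_inv := by rintro ⟨⟨a, b⟩, h⟩; simp only at h; subst h; rfl
        right_inv := fun j => rfl }
    rw [Fintype.card_congr e, Fintype.card_fin]
  have h2 : Fintype.card (RI s) =
      Fintype.card (Fin (s+2) × Fin s) - Fintype.card {p : Fin (s+2) × Fin s // p.1 = nu s p.2} :=
    Fintype.card_subtype_compl _
  rw [h2, h1, Fintype.card_prod, Fintype.card_fin, Fintype.card_fin]
  have : (s+2) * s = s * (s+1) + s := by ring
  omega

def mkR {s : ℕ} (τ : Fin (s+2)) (j : Fin s) : RI s :=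
  if h : τ = nu s j then ⟨(⟨s+1, by omega⟩, j), by
    simp only [nu, ne_eq, Fin.ext_iff]; omega⟩
  else ⟨(τ, j), h⟩

lemma mkR_eq {s : ℕ} {τ : Fin (s+2)} {j : Fin s} (h : τ ≠ nu s j) :
    (mkR τ j).1 = (τ, j) := by
  simp only [mkR, dif_neg h]

def fstI {s : ℕ} (i : RI s) : Fin (s+2) := i.1.1
def sndI {s : ℕ} (i : RI s) : Fin (s+2) := nu s i.1.2
def thdI {s : ℕ} (i : RI s) : Fin (s+2) :=
  if i.1.1.1 = s then ⟨s+1, by omega⟩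
  else if i.1.1.1 = s+1 then ⟨s, by omega⟩
  else if i.1.1.1 < i.1.2.1 then ⟨s, by omega⟩ else ⟨s+1, by omega⟩

lemma thdI_cases {s : ℕ} (i : RI s) : (thdI i).1 = s ∨ (thdI i).1 = s+1 := by
  unfold thdI; split_ifs <;> simp

lemma fst_ne_snd {s : ℕ} (i : RI s) : fstI i ≠ sndI i := i.2

lemma fst_ne_thd {s : ℕ} (i : RI s) : fstI i ≠ thdI i := by
  intro hc
  have h1 : (fstI i).1 = (thdI i).1 := congrArg Fin.val hc
  revert h1
  unfold thdI fstI
  split_ifs with h1 h2 h3 <;> simp <;> omega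

lemma snd_ne_thd {s : ℕ} (i : RI s) : sndI i ≠ thdI i := by
  intro hc
  have hv : i.1.2.1 < s := i.1.2.2
  have h1 : i.1.2.1 = (thdI i).1 := congrArg Fin.val hc
  revert h1
  unfold thdI
  split_ifs with h1 h2 h3 <;> simp <;> omega

lemma exists_perm3 {w : ℕ} (hw : 2 < w) (a b c : Fin w)
    (hab : a ≠ b) (hac : a ≠ c) (hbc : b ≠ c) :
    ∃ g : Equiv.Perm (Fin w), g ⟨0, by omega⟩ = a ∧ g ⟨1, by omega⟩ = b ∧ g ⟨2, by omega⟩ = c := by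
  set z0 : Fin w := ⟨0, by omega⟩ with hz0
  set z1 : Fin w := ⟨1, by omega⟩ with hz1
  set z2 : Fin w := ⟨2, by omega⟩ with hz2
  have h01 : z0 ≠ z1 := by simp [hz0, hz1, Fin.ext_iff]
  have h02 : z0 ≠ z2 := by simp [hz0, hz2, Fin.ext_iff]
  have h12 : z1 ≠ z2 := by simp [hz1, hz2, Fin.ext_iff]
  set p1 : Equiv.Perm (Fin w) := Equiv.swap z0 a with hp1def
  have hp1 : p1 z0 = a := Equiv.swap_apply_left _ _
  set b1 := p1.symm b with hb1def
  have hpb1 : p1 b1 = b := Equiv.apply_symm_apply _ _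
  have hb1 : b1 ≠ z0 := fun h => hab (by rw [← hp1, ← h, hpb1])
  set p2 : Equiv.Perm (Fin w) := p1 * Equiv.swap z1 b1 with hp2def
  have hp2a : p2 z0 = a := by
    rw [hp2def, Equiv.Perm.mul_apply, Equiv.swap_apply_of_ne_of_ne h01 (Ne.symm hb1), hp1]
  have hp2b : p2 z1 = b := by
    by_cases h : b1 = z1
    · rw [hp2def, Equiv.Perm.mul_apply, ← h, Equiv.swap_self, Equiv.refl_apply]; exact hpb1
    · rw [hp2def, Equiv.Perm.mul_apply, Equiv.swap_apply_left]; exact hpb1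
  set c1 := p2.symm c with hc1def
  have hpc1 : p2 c1 = c := Equiv.apply_symm_apply _ _
  have hc10 : c1 ≠ z0 := fun h => hac (by rw [← hp2a, ← h, hpc1])
  have hc11 : c1 ≠ z1 := fun h => hbc (by rw [← hp2b, ← h, hpc1])
  refine ⟨p2 * Equiv.swap z2 c1, ?_, ?_, ?_⟩
  · rw [Equiv.Perm.mul_apply, Equiv.swap_apply_of_ne_of_ne h02 (Ne.symm hc10)]; exact hp2a
  · rw [Equiv.Perm.mul_apply, Equiv.swap_apply_of_ne_of_ne h12 (Ne.symm hc11)]; exact hp2b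
  · by_cases h : c1 = z2
    · rw [Equiv.Perm.mul_apply, ← h, Equiv.swap_self, Equiv.refl_apply]; exact hpc1
    · rw [Equiv.Perm.mul_apply, Equiv.swap_apply_left]; exact hpc1

lemma mkR_fst {s : ℕ} {τ : Fin (s+2)} {j : Fin s} (h : τ ≠ nu s j) : fstI (mkR τ j) = τ := by
  unfold fstI; rw [mkR_eq h]
lemma mkR_snd {s : ℕ} {τ : Fin (s+2)} {j : Fin s} (h : τ ≠ nu s j) : sndI (mkR τ j) = nu s j := by
  unfold sndI; rw [mkR_eq h]
lemma mkR_thd_A {s : ℕ} {τ : Fin (s+2)} {j : Fin s} (h : τ ≠ nu s j) (hA : τ.1 = s) :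
    thdI (mkR τ j) = ⟨s+1, by omega⟩ := by
  unfold thdI; rw [mkR_eq h]; simp only [hA, if_pos]
lemma mkR_thd_B {s : ℕ} {τ : Fin (s+2)} {j : Fin s} (h : τ ≠ nu s j) (hB : τ.1 = s+1) :
    thdI (mkR τ j) = ⟨s, by omega⟩ := by
  unfold thdI; rw [mkR_eq h]
  simp only []
  rw [if_neg (by omega), if_pos hB]
lemma mkR_thd_lt {s : ℕ} {τ : Fin (s+2)} {j : Fin s} (h : τ ≠ nu s j) (hlt : τ.1 < j.1) :
    thdI (mkR τ j) = ⟨s, by omega⟩ := by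
  have hj := j.2
  unfold thdI; rw [mkR_eq h]
  simp only []
  rw [if_neg (by omega), if_neg (by omega), if_pos hlt]
lemma mkR_thd_gt {s : ℕ} {τ : Fin (s+2)} {j : Fin s} (h : τ ≠ nu s j) (hn : τ.1 < s) (hgt : j.1 < τ.1) :
    thdI (mkR τ j) = ⟨s+1, by omega⟩ := by
  unfold thdI; rw [mkR_eq h]
  simp only []
  rw [if_neg (by omega), if_neg (by omega), if_neg (by omega)]


theorem part1 (s : ℕ) (hs : 2 ≤ s) : SuitableCoreExists (s*(s+1)) (s+2) (2*s) := by
  classical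
  have hw : 2 < s + 2 := by omega
  have hex : ∀ i : RI s, ∃ g : Equiv.Perm (Fin (s+2)),
      g ⟨0, by omega⟩ = fstI i ∧ g ⟨1, by omega⟩ = sndI i ∧ g ⟨2, by omega⟩ = thdI i :=
    fun i => exists_perm3 hw _ _ _ (fst_ne_snd i) (fst_ne_thd i) (snd_ne_thd i)
  choose g hg0 hg1 hg2 using hex
  let e : Fin (s*(s+1)) ≃ RI s := (Fintype.equivFinOfCardEq (card_RI s)).symm
  refine ⟨fun i => g (e i), ?_⟩
  intro σ T hσT hT
  have hTsub : T ⊆ univ.erase σ := fun τ hτ => mem_erase.2 ⟨fun h => hσT (h ▸ hτ), mem_univ τ⟩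
  have hTcard : T.card ≤ s + 1 := by
    have h := card_le_card hTsub
    rwa [card_erase_of_mem (mem_univ _), card_univ, Fintype.card_fin] at h
  have hcardeq : ((univ : Finset (Fin (s*(s+1)))).filter fun i =>
        ∀ τ ∈ T, (g (e i)).symm σ < (g (e i)).symm τ).card
      = ((univ : Finset (RI s)).filter fun i => ∀ τ ∈ T, (g i).symm σ < (g i).symm τ).card :=
    filter_card_equiv e (fun i : RI s => ∀ τ ∈ T, (g i).symm σ < (g i).symm τ)
  show 2*s - T.card ≤ ((univ : Finset (Fin (s*(s+1)))).filter fun i =>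
        ∀ τ ∈ T, (g (e i)).symm σ < (g (e i)).symm τ).card
  rw [hcardeq]
  set F := (univ : Finset (RI s)).filter (fun i => ∀ τ ∈ T, (g i).symm σ < (g i).symm τ) with hF
  have hsymm0 : ∀ i : RI s, (g i).symm (fstI i) = ⟨0, by omega⟩ :=
    fun i => by rw [← hg0 i, Equiv.symm_apply_apply]
  have hsymm1 : ∀ i : RI s, (g i).symm (sndI i) = ⟨1, by omega⟩ :=
    fun i => by rw [← hg1 i, Equiv.symm_apply_apply]
  have hsymm2 : ∀ i : RI s, (g i).symm (thdI i) = ⟨2, by omega⟩ :=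
    fun i => by rw [← hg2 i, Equiv.symm_apply_apply]
  have hneq : ∀ (i : RI s) (τ x : Fin (s+2)), τ ≠ g i x → (g i).symm τ ≠ x :=
    fun i τ x h hc => h (by rw [← hc, Equiv.apply_symm_apply])
  have inF1 : ∀ i : RI s, fstI i = σ → i ∈ F := by
    intro i hf
    rw [hF, mem_filter]
    refine ⟨mem_univ _, fun τ hτ => ?_⟩
    have h0 : (g i).symm σ = ⟨0, by omega⟩ := by rw [← hf]; exact hsymm0 i
    have h1 : (g i).symm τ ≠ (⟨0, by omega⟩ : Fin (s+2)) := by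
      apply hneq; rw [hg0 i, hf]; rintro rfl; exact hσT hτ
    rw [h0, Fin.lt_def]
    show (0:ℕ) < ((g i).symm τ).1
    have h1' : ((g i).symm τ).1 ≠ 0 := fun hh => h1 (Fin.ext hh)
    omega
  have inF2 : ∀ i : RI s, sndI i = σ → fstI i ∉ T → i ∈ F := by
    intro i hsnd hfst
    rw [hF, mem_filter]
    refine ⟨mem_univ _, fun τ hτ => ?_⟩
    have h0 : (g i).symm σ = ⟨1, by omega⟩ := by rw [← hsnd]; exact hsymm1 i
    have h1 : (g i).symm τ ≠ (⟨0, by omega⟩ : Fin (s+2)) := by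
      apply hneq; rw [hg0 i]; rintro rfl; exact hfst hτ
    have h2 : (g i).symm τ ≠ (⟨1, by omega⟩ : Fin (s+2)) := by
      apply hneq; rw [hg1 i, hsnd]; rintro rfl; exact hσT hτ
    rw [h0, Fin.lt_def]
    show (1:ℕ) < ((g i).symm τ).1
    have h1' : ((g i).symm τ).1 ≠ 0 := fun hh => h1 (Fin.ext hh)
    have h2' : ((g i).symm τ).1 ≠ 1 := fun hh => h2 (Fin.ext hh)
    omega
  have inF3 : ∀ i : RI s, thdI i = σ → fstI i ∉ T → sndI i ∉ T → i ∈ F := by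
    intro i hthd hfst hsnd
    rw [hF, mem_filter]
    refine ⟨mem_univ _, fun τ hτ => ?_⟩
    have h0 : (g i).symm σ = ⟨2, by omega⟩ := by rw [← hthd]; exact hsymm2 i
    have h1 : (g i).symm τ ≠ (⟨0, by omega⟩ : Fin (s+2)) := by
      apply hneq; rw [hg0 i]; rintro rfl; exact hfst hτ
    have h2 : (g i).symm τ ≠ (⟨1, by omega⟩ : Fin (s+2)) := by
      apply hneq; rw [hg1 i]; rintro rfl; exact hsnd hτ
    have h3 : (g i).symm τ ≠ (⟨2, by omega⟩ : Fin (s+2)) := by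
      apply hneq; rw [hg2 i, hthd]; rintro rfl; exact hσT hτ
    rw [h0, Fin.lt_def]
    show (2:ℕ) < ((g i).symm τ).1
    have h1' : ((g i).symm τ).1 ≠ 0 := fun hh => h1 (Fin.ext hh)
    have h2' : ((g i).symm τ).1 ≠ 1 := fun hh => h2 (Fin.ext hh)
    have h3' : ((g i).symm τ).1 ≠ 2 := fun hh => h3 (Fin.ext hh)
    omega
  have hσcases : σ.1 < s ∨ σ.1 = s ∨ σ.1 = s + 1 := by have := σ.2; omega
  have mkR_sndc : ∀ (τ : Fin (s+2)) (v : Fin s), (mkR τ v).1.2 = v := by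
    intro τ v; unfold mkR; split_ifs <;> rfl
  have mkR_sndI : ∀ (τ : Fin (s+2)) (v : Fin s), sndI (mkR τ v) = nu s v := by
    intro τ v; unfold sndI; rw [mkR_sndc]
  have injOn_snd : ∀ (τ : Fin (s+2)) (D : Finset (Fin s)),
      Set.InjOn (fun v : Fin s => mkR τ v) D := by
    intro τ D a _ b _ hab
    have h2 : (mkR τ a).1.2 = (mkR τ b).1.2 := congrArg (fun i : RI s => i.1.2) hab
    rwa [mkR_sndc, mkR_sndc] at h2
  have injOn_fst : ∀ (j : Fin s) (D : Finset (Fin (s+2))), (∀ τ ∈ D, τ ≠ nu s j) →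
      Set.InjOn (fun τ => mkR τ j) D := by
    intro j D hD a ha b hb hab
    have h2 : fstI (mkR a j) = fstI (mkR b j) := congrArg fstI hab
    rwa [mkR_fst (hD a (Finset.mem_coe.1 ha)), mkR_fst (hD b (Finset.mem_coe.1 hb))] at h2
  have nu_inj : ∀ (a b : Fin s), nu s a = nu s b → a = b := by
    intro a b h
    have hv : (nu s a).val = (nu s b).val := congrArg Fin.val h
    simp only [nu] at hv
    exact Fin.ext hv
  obtain hσv | hσv | hσv := hσcases
  · -- σ normal
    set jσ : Fin s := ⟨σ.1, hσv⟩ with hjσ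
    have hnuσ : nu s jσ = σ := Fin.ext rfl
    have hmem1 : ∀ j' ∈ univ.erase jσ, mkR σ j' ∈ F := by
      intro j' hj'
      have hne : σ ≠ nu s j' := by
        intro h
        exact (mem_erase.1 hj').1 (nu_inj j' jσ (by rw [hnuσ, ← h]))
      exact inF1 _ (mkR_fst hne)
    have hmem2 : ∀ τ ∈ (univ.erase σ) \ T, mkR τ jσ ∈ F := by
      intro τ hτ
      have hτσ : τ ≠ σ := (mem_erase.1 (mem_sdiff.1 hτ).1).1
      have hτT : τ ∉ T := (mem_sdiff.1 hτ).2
      have hne : τ ≠ nu s jσ := by rw [hnuσ]; exact hτσ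
      apply inF2
      · rw [mkR_sndI, hnuσ]
      · rw [mkR_fst hne]; exact hτT
    have hdisj : ∀ a ∈ univ.erase jσ, ∀ b ∈ (univ.erase σ) \ T, mkR σ a ≠ mkR b jσ := by
      intro a ha b hb h
      have h2 : (mkR σ a).1.2 = (mkR b jσ).1.2 := congrArg (fun i : RI s => i.1.2) h
      rw [mkR_sndc, mkR_sndc] at h2
      exact (mem_erase.1 ha).1 h2
    have key := two_images_le (univ.erase jσ) ((univ.erase σ) \ T)
        (fun j' => mkR σ j') (fun τ => mkR τ jσ) F hmem1 hmem2
        (injOn_snd σ _)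
        (injOn_fst jσ _ (fun τ hτ => by
          rw [hnuσ]; exact (mem_erase.1 (mem_sdiff.1 hτ).1).1)) hdisj
    have c1 : (univ.erase jσ).card = s - 1 := by
      rw [card_erase_of_mem (mem_univ _), card_univ, Fintype.card_fin]
    have c2 : ((univ.erase σ) \ T).card = s + 1 - T.card := by
      rw [card_sdiff_of_subset hTsub, card_erase_of_mem (mem_univ _), card_univ, Fintype.card_fin]
      omega
    omega
  · -- σ = A (val s)
    have hmem1 : ∀ j' ∈ (univ : Finset (Fin s)), mkR σ j' ∈ F := by
      intro j' _
      have hne : σ ≠ nu s j' := by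
        intro h
        have hv : σ.1 = j'.1 := congrArg Fin.val h
        have := j'.2
        omega
      exact inF1 _ (mkR_fst hne)
    by_cases hrs : s ≤ T.card
    · have key := two_images_le univ (∅ : Finset (Fin s))
          (fun j' => mkR σ j') (fun j' => mkR σ j') F hmem1
          (by intro b hb; exact absurd hb (notMem_empty b)) (injOn_snd σ _) (injOn_snd σ _)
          (by intro a _ b hb; exact absurd hb (notMem_empty b))
      rw [card_univ, Fintype.card_fin, card_empty] at key
      omega
    · set U := univ.filter (fun j : Fin s => nu s j ∉ T) with hUdef
      have hsplit : U.card + (univ.filter (fun j : Fin s => nu s j ∈ T)).card = s := by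
        have h := Finset.card_filter_add_card_filter_not
          (s := (univ : Finset (Fin s))) (p := fun j => nu s j ∉ T)
        simp only [not_not] at h
        rw [card_univ, Fintype.card_fin] at h
        exact h
      by_cases hBT : (⟨s+1, by omega⟩ : Fin (s+2)) ∈ T
      · have himg : (univ.filter (fun j : Fin s => nu s j ∈ T)).card
            ≤ (T.erase ⟨s+1, by omega⟩).card := by
          apply card_le_card_of_injOn (nu s)
          · intro j hj
            refine mem_erase.2 ⟨?_, (mem_filter.1 hj).2⟩
            intro h
            have hv : j.1 = s+1 := congrArg Fin.val h
            have := j.2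
            omega
          · intro a _ b _ h; exact nu_inj a b h
        rw [card_erase_of_mem hBT] at himg
        have hT1 : 1 ≤ T.card := card_pos.2 ⟨_, hBT⟩
        have hUne : U.Nonempty := card_pos.1 (by omega)
        set u0 := U.min' hUne with hu0def
        have hu0U : u0 ∈ U := U.min'_mem hUne
        have hu0T : nu s u0 ∉ T := (mem_filter.1 hu0U).2
        have hmem2 : ∀ v ∈ U.erase u0, mkR (nu s u0) v ∈ F := by
          intro v hv
          have hvU : v ∈ U := mem_of_mem_erase hv
          have hlt : u0 < v := Finset.min'_lt_of_mem_erase_min' U hUne hv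
          have hne : nu s u0 ≠ nu s v := fun h => absurd (nu_inj _ _ h) (ne_of_lt hlt)
          apply inF3
          · rw [mkR_thd_lt hne hlt]
            exact Fin.ext hσv.symm
          · rw [mkR_fst hne]; exact hu0T
          · rw [mkR_sndI]; exact (mem_filter.1 hvU).2
        have hdisj : ∀ a ∈ (univ : Finset (Fin s)), ∀ b ∈ U.erase u0,
            mkR σ a ≠ mkR (nu s u0) b := by
          intro a _ b _ h
          have hnea : σ ≠ nu s a := by
            intro hh
            have hv : σ.1 = a.1 := congrArg Fin.val hh
            have := a.2
            omega
          have hlt2 : u0 < b := Finset.min'_lt_of_mem_erase_min' U hUne (by assumption)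
          have hneb : nu s u0 ≠ nu s b := fun hh => absurd (nu_inj _ _ hh) (ne_of_lt hlt2)
          have h2 : fstI (mkR σ a) = fstI (mkR (nu s u0) b) := congrArg fstI h
          rw [mkR_fst hnea, mkR_fst hneb] at h2
          have hv : σ.1 = u0.1 := congrArg Fin.val h2
          have := u0.2
          omega
        have key := two_images_le univ (U.erase u0)
            (fun j' => mkR σ j') (fun v => mkR (nu s u0) v) F hmem1 hmem2
            (injOn_snd σ _) (injOn_snd (nu s u0) _) hdisj
        rw [card_univ, Fintype.card_fin, card_erase_of_mem hu0U] at key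
        omega
      · have himg : (univ.filter (fun j : Fin s => nu s j ∈ T)).card ≤ T.card := by
          apply card_le_card_of_injOn (nu s)
          · intro j hj; exact (mem_filter.1 hj).2
          · intro a _ b _ h; exact nu_inj a b h
        have hmem2 : ∀ v ∈ U, mkR ⟨s+1, by omega⟩ v ∈ F := by
          intro v hv
          have hne : (⟨s+1, by omega⟩ : Fin (s+2)) ≠ nu s v := by
            intro h
            have hv2 : s+1 = v.1 := congrArg Fin.val h
            have := v.2
            omega
          apply inF3
          · rw [mkR_thd_B hne rfl]
            exact Fin.ext hσv.symm
          · rw [mkR_fst hne]; exact hBT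
          · rw [mkR_sndI]; exact (mem_filter.1 hv).2
        have hdisj : ∀ a ∈ (univ : Finset (Fin s)), ∀ b ∈ U,
            mkR σ a ≠ mkR ⟨s+1, by omega⟩ b := by
          intro a _ b _ h
          have hnea : σ ≠ nu s a := by
            intro hh
            have hv : σ.1 = a.1 := congrArg Fin.val hh
            have := a.2
            omega
          have hneb : (⟨s+1, by omega⟩ : Fin (s+2)) ≠ nu s b := by
            intro hh
            have hv2 : s+1 = b.1 := congrArg Fin.val hh
            have := b.2
            omega
          have h2 : fstI (mkR σ a) = fstI (mkR ⟨s+1, by omega⟩ b) := congrArg fstI h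
          rw [mkR_fst hnea, mkR_fst hneb] at h2
          have hv : σ.1 = s+1 := congrArg Fin.val h2
          omega
        have key := two_images_le univ U
            (fun j' => mkR σ j') (fun v => mkR ⟨s+1, by omega⟩ v) F hmem1 hmem2
            (injOn_snd σ _) (injOn_snd _ _) hdisj
        rw [card_univ, Fintype.card_fin] at key
        omega
  · -- σ = B (val s+1)
    have hmem1 : ∀ j' ∈ (univ : Finset (Fin s)), mkR σ j' ∈ F := by
      intro j' _
      have hne : σ ≠ nu s j' := by
        intro h
        have hv : σ.1 = j'.1 := congrArg Fin.val h
        have := j'.2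
        omega
      exact inF1 _ (mkR_fst hne)
    by_cases hrs : s ≤ T.card
    · have key := two_images_le univ (∅ : Finset (Fin s))
          (fun j' => mkR σ j') (fun j' => mkR σ j') F hmem1
          (by intro b hb; exact absurd hb (notMem_empty b)) (injOn_snd σ _) (injOn_snd σ _)
          (by intro a _ b hb; exact absurd hb (notMem_empty b))
      rw [card_univ, Fintype.card_fin, card_empty] at key
      omega
    · set U := univ.filter (fun j : Fin s => nu s j ∉ T) with hUdef
      have hsplit : U.card + (univ.filter (fun j : Fin s => nu s j ∈ T)).card = s := by
        have h := Finset.card_filter_add_card_filter_not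
          (s := (univ : Finset (Fin s))) (p := fun j => nu s j ∉ T)
        simp only [not_not] at h
        rw [card_univ, Fintype.card_fin] at h
        exact h
      by_cases hAT : (⟨s, by omega⟩ : Fin (s+2)) ∈ T
      · have himg : (univ.filter (fun j : Fin s => nu s j ∈ T)).card
            ≤ (T.erase ⟨s, by omega⟩).card := by
          apply card_le_card_of_injOn (nu s)
          · intro j hj
            refine mem_erase.2 ⟨?_, (mem_filter.1 hj).2⟩
            intro h
            have hv : j.1 = s := congrArg Fin.val h
            have := j.2
            omega
          · intro a _ b _ h; exact nu_inj a b h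
        rw [card_erase_of_mem hAT] at himg
        have hT1 : 1 ≤ T.card := card_pos.2 ⟨_, hAT⟩
        have hUne : U.Nonempty := card_pos.1 (by omega)
        set u0 := U.max' hUne with hu0def
        have hu0U : u0 ∈ U := U.max'_mem hUne
        have hu0T : nu s u0 ∉ T := (mem_filter.1 hu0U).2
        have hu0s : u0.1 < s := u0.2
        have hmem2 : ∀ v ∈ U.erase u0, mkR (nu s u0) v ∈ F := by
          intro v hv
          have hvU : v ∈ U := mem_of_mem_erase hv
          have hlt : v < u0 := Finset.lt_max'_of_mem_erase_max' U hUne hv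
          have hne : nu s u0 ≠ nu s v := fun h => absurd (nu_inj _ _ h).symm (ne_of_lt hlt)
          apply inF3
          · rw [mkR_thd_gt hne hu0s hlt]
            exact Fin.ext hσv.symm
          · rw [mkR_fst hne]; exact hu0T
          · rw [mkR_sndI]; exact (mem_filter.1 hvU).2
        have hdisj : ∀ a ∈ (univ : Finset (Fin s)), ∀ b ∈ U.erase u0,
            mkR σ a ≠ mkR (nu s u0) b := by
          intro a _ b hb h
          have hnea : σ ≠ nu s a := by
            intro hh
            have hv : σ.1 = a.1 := congrArg Fin.val hh
            have := a.2
            omega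
          have hlt2 : b < u0 := Finset.lt_max'_of_mem_erase_max' U hUne hb
          have hneb : nu s u0 ≠ nu s b := fun hh => absurd (nu_inj _ _ hh).symm (ne_of_lt hlt2)
          have h2 : fstI (mkR σ a) = fstI (mkR (nu s u0) b) := congrArg fstI h
          rw [mkR_fst hnea, mkR_fst hneb] at h2
          have hv : σ.1 = u0.1 := congrArg Fin.val h2
          omega
        have key := two_images_le univ (U.erase u0)
            (fun j' => mkR σ j') (fun v => mkR (nu s u0) v) F hmem1 hmem2
            (injOn_snd σ _) (injOn_snd (nu s u0) _) hdisj
        rw [card_univ, Fintype.card_fin, card_erase_of_mem hu0U] at key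
        omega
      · have himg : (univ.filter (fun j : Fin s => nu s j ∈ T)).card ≤ T.card := by
          apply card_le_card_of_injOn (nu s)
          · intro j hj; exact (mem_filter.1 hj).2
          · intro a _ b _ h; exact nu_inj a b h
        have hmem2 : ∀ v ∈ U, mkR ⟨s, by omega⟩ v ∈ F := by
          intro v hv
          have hne : (⟨s, by omega⟩ : Fin (s+2)) ≠ nu s v := by
            intro h
            have hv2 : s = v.1 := congrArg Fin.val h
            have := v.2
            omega
          apply inF3
          · rw [mkR_thd_A hne rfl]
            exact Fin.ext hσv.symm
          · rw [mkR_fst hne]; exact hAT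
          · rw [mkR_sndI]; exact (mem_filter.1 hv).2
        have hdisj : ∀ a ∈ (univ : Finset (Fin s)), ∀ b ∈ U,
            mkR σ a ≠ mkR ⟨s, by omega⟩ b := by
          intro a _ b _ h
          have hnea : σ ≠ nu s a := by
            intro hh
            have hv : σ.1 = a.1 := congrArg Fin.val hh
            have := a.2
            omega
          have hneb : (⟨s, by omega⟩ : Fin (s+2)) ≠ nu s b := by
            intro hh
            have hv2 : s = b.1 := congrArg Fin.val hh
            have := b.2
            omega
          have h2 : fstI (mkR σ a) = fstI (mkR ⟨s, by omega⟩ b) := congrArg fstI h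
          rw [mkR_fst hnea, mkR_fst hneb] at h2
          have hv : σ.1 = s := congrArg Fin.val h2
          omega
        have key := two_images_le univ U
            (fun j' => mkR σ j') (fun v => mkR ⟨s, by omega⟩ v) F hmem1 hmem2
            (injOn_snd σ _) (injOn_snd _ _) hdisj
        rw [card_univ, Fintype.card_fin] at key
        omega

lemma card_supersets {α : Type*} [DecidableEq α] (U A : Finset α) (k : ℕ)
    (hAU : A ⊆ U) (hk : A.card ≤ k) :
    ((Finset.powersetCard k U).filter (fun S => A ⊆ S)).card
      = (U.card - A.card).choose (k - A.card) := by
  have hbij : ((Finset.powersetCard k U).filter (fun S => A ⊆ S)).card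
      = (Finset.powersetCard (k - A.card) (U \ A)).card := by
    apply Finset.card_bij' (fun S _ => S \ A) (fun B _ => B ∪ A)
    · intro S hS
      obtain ⟨hS1, hS2⟩ := mem_filter.1 hS
      obtain ⟨hsub, hcard⟩ := mem_powersetCard.1 hS1
      exact mem_powersetCard.2 ⟨sdiff_subset_sdiff hsub (le_refl _), by rw [card_sdiff_of_subset hS2, hcard]⟩
    · intro B hB
      obtain ⟨hsub, hcard⟩ := mem_powersetCard.1 hB
      have hdisj : Disjoint B A := disjoint_of_subset_left hsub sdiff_disjoint
      refine mem_filter.2 ⟨mem_powersetCard.2 ⟨?_, ?_⟩, subset_union_right⟩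
      · exact union_subset (hsub.trans (sdiff_subset)) hAU
      · rw [card_union_of_disjoint hdisj, hcard]; omega
    · intro S hS
      obtain ⟨_, hS2⟩ := mem_filter.1 hS
      exact sdiff_union_of_subset hS2
    · intro B hB
      obtain ⟨hsub, _⟩ := mem_powersetCard.1 hB
      have hdisj : Disjoint B A := disjoint_of_subset_left hsub sdiff_disjoint
      exact union_sdiff_cancel_right hdisj
  rw [hbij, Finset.card_powersetCard, card_sdiff_of_subset hAU]

lemma card_supersets_big {α : Type*} [DecidableEq α] (U A : Finset α) (k : ℕ)
    (hk : k < A.card) :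
    ((Finset.powersetCard k U).filter (fun S => A ⊆ S)).card = 0 := by
  rw [Finset.card_eq_zero, Finset.eq_empty_iff_forall_notMem]
  intro S hS
  obtain ⟨hS1, hS2⟩ := mem_filter.1 hS
  obtain ⟨_, hcard⟩ := mem_powersetCard.1 hS1
  have := card_le_card hS2
  omega

lemma all_eq_of_sum {ι : Type*} (A : Finset ι) (f : ι → ℕ) (c : ℕ)
    (hlb : ∀ x ∈ A, c ≤ f x) (hsum : ∑ x ∈ A, f x ≤ A.card * c) :
    ∀ x ∈ A, f x = c := by
  intro x hx
  by_contra hne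
  have hlt : c < f x := lt_of_le_of_ne (hlb x hx) (Ne.symm hne)
  have h2 : ∑ _y ∈ A, c < ∑ y ∈ A, f y :=
    Finset.sum_lt_sum hlb ⟨x, hx, hlt⟩
  rw [Finset.sum_const, smul_eq_mul] at h2
  omega

lemma sum_powerset_pair {α : Type*} [DecidableEq α] (f : Finset α → ℕ) {τ ρ : α} (h : τ ≠ ρ) :
    ∑ A ∈ (insert τ {ρ} : Finset α).powerset, f A
      = f ∅ + f {ρ} + (f {τ} + f (insert τ {ρ})) := by
  have hsing : ∀ g : Finset α → ℕ, ∑ A ∈ ({ρ} : Finset α).powerset, g A = g ∅ + g {ρ} := by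
    intro g
    rw [show ({ρ} : Finset α) = insert ρ ∅ from rfl,
      Finset.sum_powerset_insert (notMem_empty ρ), Finset.powerset_empty,
      Finset.sum_singleton, Finset.sum_singleton]
  rw [Finset.sum_powerset_insert (by simp [h]), hsing, hsing (fun A => f (insert τ A))]
  simp

lemma sum_powerset_triple {α : Type*} [DecidableEq α] (f : Finset α → ℕ) {τ ρ π : α}
    (hτρ : τ ≠ ρ) (hτπ : τ ≠ π) (hρπ : ρ ≠ π) :
    ∑ A ∈ (insert τ (insert ρ {π}) : Finset α).powerset, f A
      = (f ∅ + f {π} + (f {ρ} + f (insert ρ {π})))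
        + (f {τ} + f (insert τ {π}) + (f (insert τ {ρ}) + f (insert τ (insert ρ {π})))) := by
  rw [Finset.sum_powerset_insert (by simp [hτρ, hτπ]), sum_powerset_pair f hρπ,
    sum_powerset_pair (fun A => f (insert τ A)) hρπ]
  simp

lemma ch2 (m : ℕ) : 2 * Nat.choose (m+2) 2 = (m+2)*(m+1) := by
  induction m with
  | zero => rfl
  | succ m ih =>
    have h := Nat.choose_succ_succ (m+2) 1
    rw [Nat.choose_one_right] at h
    rw [show m+1+2 = m+2+1 from rfl, h]
    calc 2*((m+2) + (m+2).choose 2) = 2*(m+2) + 2*(m+2).choose 2 := by ring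
      _ = 2*(m+2) + (m+2)*(m+1) := by rw [ih]
      _ = (m+2+1)*(m+1+1) := by ring

lemma ch3 (m : ℕ) : 6 * Nat.choose (m+3) 3 = (m+3)*(m+2)*(m+1) := by
  induction m with
  | zero => rfl
  | succ m ih =>
    have h := Nat.choose_succ_succ (m+3) 2
    rw [show m+1+3 = m+3+1 from rfl, h]
    calc 6*((m+3).choose 2 + (m+3).choose 3)
        = 3*(2*(m+3).choose 2) + 6*(m+3).choose 3 := by ring
      _ = 3*((m+3)*(m+2)) + (m+3)*(m+2)*(m+1) := by rw [ch2 (m+1), ih]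
      _ = (m+3+1)*(m+1+2)*(m+1+1) := by ring

lemma sumlem2 (s : ℕ) (hs : 2 ≤ s) :
    ∑ x ∈ range (s+3), (if x ≤ 2 then (s+2-x).choose (2-x) else 0) = (s+3).choose 2 := by
  obtain ⟨m, rfl⟩ : ∃ m, s = m+2 := ⟨s-2, by omega⟩
  rw [← Finset.sum_subset (Finset.range_subset_range.2 (by omega : 3 ≤ m+2+3))
    (fun x _ hx => by rw [if_neg (by simp at hx ⊢; omega)])]
  rw [Finset.sum_range_succ, Finset.sum_range_succ, Finset.sum_range_succ, Finset.sum_range_zero]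
  have t0 : (if (0:ℕ) ≤ 2 then (m+2+2-0).choose (2-0) else 0) = (m+4).choose 2 := by norm_num
  have t1 : (if (1:ℕ) ≤ 2 then (m+2+2-1).choose (2-1) else 0) = m+3 := by
    rw [if_pos (by omega), show m+2+2-1 = m+3 by omega, show 2-1 = 1 by omega, Nat.choose_one_right]
  have t2 : (if (2:ℕ) ≤ 2 then (m+2+2-2).choose (2-2) else 0) = 1 := by
    rw [if_pos (by omega), show 2-2 = 0 by omega, Nat.choose_zero_right]
  rw [t0, t1, t2]
  have h : (m+5).choose 2 = (m+4).choose 1 + (m+4).choose 2 := Nat.choose_succ_succ _ _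
  rw [Nat.choose_one_right] at h
  rw [show m+2+3 = m+5 by omega, h]
  omega

lemma sumlem3 (s : ℕ) (hs : 2 ≤ s) :
    ∑ x ∈ range (s+3), (if x ≤ 3 then (s+2-x).choose (3-x) else 0) = (s+3).choose 3 := by
  obtain ⟨m, rfl⟩ : ∃ m, s = m+2 := ⟨s-2, by omega⟩
  rw [← Finset.sum_subset (Finset.range_subset_range.2 (by omega : 4 ≤ m+2+3))
    (fun x _ hx => by rw [if_neg (by simp at hx ⊢; omega)])]
  rw [Finset.sum_range_succ, Finset.sum_range_succ, Finset.sum_range_succ,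
    Finset.sum_range_succ, Finset.sum_range_zero]
  have t0 : (if (0:ℕ) ≤ 3 then (m+2+2-0).choose (3-0) else 0) = (m+4).choose 3 := by norm_num
  have t1 : (if (1:ℕ) ≤ 3 then (m+2+2-1).choose (3-1) else 0) = (m+3).choose 2 := by
    rw [if_pos (by omega), show m+2+2-1 = m+3 by omega, show 3-1 = 2 by omega]
  have t2 : (if (2:ℕ) ≤ 3 then (m+2+2-2).choose (3-2) else 0) = m+2 := by
    rw [if_pos (by omega), show m+2+2-2 = m+2 by omega, show 3-2 = 1 by omega, Nat.choose_one_right]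
  have t3 : (if (3:ℕ) ≤ 3 then (m+2+2-3).choose (3-3) else 0) = 1 := by
    rw [if_pos (by omega), show 3-3 = 0 by omega, Nat.choose_zero_right]
  rw [t0, t1, t2, t3]
  have h1 : (m+5).choose 3 = (m+4).choose 2 + (m+4).choose 3 := Nat.choose_succ_succ _ _
  have h2 : (m+4).choose 2 = (m+3).choose 1 + (m+3).choose 2 := Nat.choose_succ_succ _ _
  rw [Nat.choose_one_right] at h2
  rw [show m+2+3 = m+5 by omega, h1, h2]
  omega

lemma id2 (s : ℕ) (hs : 2 ≤ s) :
    s*(s+1) * (s+3).choose 2 = (s+3) * ((s+2).choose 2 * (s-2+2)) := by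
  rw [show s-2+2 = s by omega]
  apply Nat.eq_of_mul_eq_mul_left (show 0 < 2 by norm_num)
  calc 2 * (s*(s+1) * (s+3).choose 2) = s*(s+1)*(2*((s+1)+2).choose 2) := by ring_nf
    _ = s*(s+1)*(((s+1)+2)*((s+1)+1)) := by rw [ch2 (s+1)]
    _ = (s+3)*((s+2)*(s+1)*s) := by ring
    _ = (s+3)*((2*(s+2).choose 2)*s) := by rw [ch2 s]
    _ = 2*((s+3)*((s+2).choose 2 * s)) := by ring

lemma id3 (s : ℕ) (hs : 2 ≤ s) :
    s*(s+1) * (s+3).choose 3 = (s+3) * ((s+2).choose 3 * (s-2+3)) := by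
  obtain ⟨m, rfl⟩ : ∃ m, s = m+2 := ⟨s-2, by omega⟩
  rw [show m+2-2+3 = m+3 by omega]
  apply Nat.eq_of_mul_eq_mul_left (show 0 < 6 by norm_num)
  calc 6 * ((m+2)*(m+2+1) * (m+2+3).choose 3)
      = (m+2)*(m+3)*(6*((m+2)+3).choose 3) := by ring
    _ = (m+2)*(m+3)*((m+2+3)*(m+2+2)*(m+2+1)) := by rw [ch3 (m+2)]
    _ = (m+2+3)*(((m+1+3)*(m+1+2)*(m+1+1))*(m+3)) := by ring
    _ = (m+2+3)*((6*((m+1)+3).choose 3)*(m+3)) := by rw [ch3 (m+1)]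
    _ = 6*((m+2+3) * ((m+2+2).choose 3 * (m+3))) := by ring

theorem part2core (s : ℕ) (hs : 2 ≤ s) : ¬ SuitableCoreExists (s*(s+1)) (s+3) (2*s) := by
  classical
  rintro ⟨C, hC⟩
  have hn : 0 < s*(s+1) := Nat.mul_pos (by omega) (by omega)
  have hw31 : s+3-1 = s+2 := by omega
  set pred : Fin (s*(s+1)) → Fin (s+3) → Finset (Fin (s+3)) :=
    fun i σ => univ.filter (fun τ => (C i).symm τ < (C i).symm σ) with hpreddef
  have pred_card : ∀ (i : Fin (s*(s+1))) (σ : Fin (s+3)), (pred i σ).card = ((C i).symm σ : ℕ) := by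
    intro i σ
    have hb : (pred i σ).card = (Finset.range ((C i).symm σ : ℕ)).card := by
      refine Finset.card_bij' (fun τ _ => (((C i).symm τ : Fin (s+3)) : ℕ))
        (fun a ha => (C i) ⟨a, lt_trans (Finset.mem_range.1 ha) ((C i).symm σ).2⟩)
        ?_ ?_ ?_ ?_
      · intro τ hτ
        have h := (mem_filter.1 hτ).2
        exact Finset.mem_range.2 (Fin.lt_def.1 h)
      · intro a ha
        refine mem_filter.2 ⟨mem_univ _, ?_⟩
        rw [Equiv.symm_apply_apply]
        exact Fin.lt_def.2 (by simpa using Finset.mem_range.1 ha)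
      · intro τ hτ
        simp [Fin.eta]
      · intro a ha
        simp [Equiv.symm_apply_apply]
    rw [hb, Finset.card_range]
  have pred_subset : ∀ (i : Fin (s*(s+1))) (σ : Fin (s+3)), pred i σ ⊆ univ.erase σ := by
    intro i σ τ hτ
    refine mem_erase.2 ⟨?_, mem_univ _⟩
    intro h
    subst h
    exact absurd (mem_filter.1 hτ).2 (lt_irrefl _)
  have hcnt : ∀ (σ : Fin (s+3)) (S : Finset (Fin (s+3))), S ⊆ univ.erase σ →
      (S.card = 2 ∨ S.card = 3) →
      s - 2 + S.card ≤ (univ.filter (fun i : Fin (s*(s+1)) => pred i σ ⊆ S)).card := by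
    intro σ S hS hk
    set T := (univ.erase σ) \ S with hTdef
    have hTcard : T.card = (s+2) - S.card := by
      rw [hTdef, card_sdiff_of_subset hS, card_erase_of_mem (mem_univ _), card_univ, Fintype.card_fin]
      omega
    have hσT : σ ∉ T := fun h => (mem_erase.1 (mem_sdiff.1 h).1).1 rfl
    have hTlt : T.card < 2*s := by omega
    have h := hC σ T hσT hTlt
    have heq : (univ.filter fun i : Fin (s*(s+1)) => ∀ τ ∈ T, (C i).symm σ < (C i).symm τ)
        = univ.filter (fun i => pred i σ ⊆ S) := by
      apply filter_congr
      intro i _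
      constructor
      · intro hall τ hτ
        by_contra hτS
        have hτσ : τ ≠ σ := by
          intro h2; subst h2; exact absurd (mem_filter.1 hτ).2 (lt_irrefl _)
        have hτT : τ ∈ T := mem_sdiff.2 ⟨mem_erase.2 ⟨hτσ, mem_univ _⟩, hτS⟩
        have h3 := hall τ hτT
        have h4 := (mem_filter.1 hτ).2
        exact absurd h3 (not_lt.2 (le_of_lt h4))
      · intro hsub τ hτ
        have hτS : τ ∉ S := (mem_sdiff.1 hτ).2
        have hτσ : τ ≠ σ := (mem_erase.1 (mem_sdiff.1 hτ).1).1
        rcases lt_trichotomy ((C i).symm σ) ((C i).symm τ) with h1 | h1 | h1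
        · exact h1
        · exact absurd ((C i).symm.injective h1) (Ne.symm hτσ)
        · exact absurd (hsub (mem_filter.2 ⟨mem_univ _, h1⟩)) hτS
    rw [heq] at h
    calc s - 2 + S.card ≤ 2*s - T.card := by omega
      _ ≤ _ := h
  have hswap : ∀ k : ℕ,
      ∑ σ : Fin (s+3), ∑ S ∈ powersetCard k (univ.erase σ),
        (univ.filter (fun i : Fin (s*(s+1)) => pred i σ ⊆ S)).card
      = ∑ i : Fin (s*(s+1)), ∑ σ : Fin (s+3),
        ((powersetCard k (univ.erase σ)).filter (fun S => pred i σ ⊆ S)).card := by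
    intro k
    have h1 : ∀ σ : Fin (s+3), ∑ S ∈ powersetCard k (univ.erase σ),
        (univ.filter (fun i : Fin (s*(s+1)) => pred i σ ⊆ S)).card
        = ∑ i : Fin (s*(s+1)), ((powersetCard k (univ.erase σ)).filter (fun S => pred i σ ⊆ S)).card := by
      intro σ
      simp only [Finset.card_filter]
      rw [Finset.sum_comm]
    rw [Finset.sum_congr rfl (fun σ _ => h1 σ), Finset.sum_comm]
  have hinner : ∀ (k : ℕ) (i : Fin (s*(s+1))) (σ : Fin (s+3)),
      ((powersetCard k (univ.erase σ)).filter (fun S => pred i σ ⊆ S)).card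
      = (fun v : ℕ => if v ≤ k then (s+2-v).choose (k-v) else 0) (((C i).symm σ : ℕ)) := by
    intro k i σ
    simp only []
    by_cases h : ((C i).symm σ : ℕ) ≤ k
    · rw [if_pos h, card_supersets _ _ _ (pred_subset i σ) (by rw [pred_card]; exact h)]
      rw [pred_card, card_erase_of_mem (mem_univ _), card_univ, Fintype.card_fin, hw31]
    · rw [if_neg h, card_supersets_big]
      rw [pred_card]
      omega
  have houter : ∀ k : ℕ, k = 2 ∨ k = 3 → ∀ σ : Fin (s+3), ∀ S ∈ powersetCard k (univ.erase σ),
      (univ.filter (fun i : Fin (s*(s+1)) => pred i σ ⊆ S)).card = s - 2 + k := by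
    intro k hk
    have hlow : ∀ σ : Fin (s+3), ∀ S ∈ powersetCard k (univ.erase σ),
        s - 2 + k ≤ (univ.filter (fun i : Fin (s*(s+1)) => pred i σ ⊆ S)).card := by
      intro σ S hS
      obtain ⟨hsub, hcard⟩ := mem_powersetCard.1 hS
      have h := hcnt σ S hsub (by rw [hcard]; exact hk)
      rw [hcard] at h
      exact h
    have hrow : ∀ i : Fin (s*(s+1)), ∑ σ : Fin (s+3),
        ((powersetCard k (univ.erase σ)).filter (fun S => pred i σ ⊆ S)).card
        = (s+3).choose k := by
      intro i
      rw [Finset.sum_congr rfl (fun σ _ => hinner k i σ)]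
      rw [Equiv.sum_comp ((C i).symm : Fin (s+3) ≃ Fin (s+3))
        (fun y : Fin (s+3) => if (y:ℕ) ≤ k then (s+2-(y:ℕ)).choose (k-(y:ℕ)) else 0)]
      rw [Fin.sum_univ_eq_sum_range (fun v => if v ≤ k then (s+2-v).choose (k-v) else 0) (s+3)]
      rcases hk with rfl | rfl
      · exact sumlem2 s hs
      · exact sumlem3 s hs
    have htotal : ∑ σ : Fin (s+3), ∑ S ∈ powersetCard k (univ.erase σ),
        (univ.filter (fun i : Fin (s*(s+1)) => pred i σ ⊆ S)).card
        = (s+3) * ((s+2).choose k * (s-2+k)) := by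
      rw [hswap k, Finset.sum_congr rfl (fun i _ => hrow i), Finset.sum_const, card_univ,
        Fintype.card_fin, smul_eq_mul]
      rcases hk with rfl | rfl
      · exact id2 s hs
      · exact id3 s hs
    have hconst : ∀ σ : Fin (s+3), (powersetCard k (univ.erase σ)).card = (s+2).choose k := by
      intro σ
      rw [card_powersetCard, card_erase_of_mem (mem_univ _), card_univ, Fintype.card_fin, hw31]
    have houter1 : ∀ σ ∈ (univ : Finset (Fin (s+3))),
        (∑ S ∈ powersetCard k (univ.erase σ),
          (univ.filter (fun i : Fin (s*(s+1)) => pred i σ ⊆ S)).card) = (s+2).choose k * (s-2+k) := by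
      apply all_eq_of_sum
      · intro σ _
        calc (s+2).choose k * (s-2+k)
            = (powersetCard k (univ.erase σ)).card * (s-2+k) := by rw [hconst σ]
          _ = ∑ _S ∈ powersetCard k (univ.erase σ), (s-2+k) := by
              rw [Finset.sum_const, smul_eq_mul]
          _ ≤ _ := Finset.sum_le_sum (hlow σ)
      · rw [htotal, card_univ, Fintype.card_fin]
    intro σ S hS
    refine all_eq_of_sum _ _ _ (hlow σ) ?_ S hS
    rw [houter1 σ (mem_univ σ), hconst σ]
  -- pick the witness row and symbol
  set i0 : Fin (s*(s+1)) := ⟨0, hn⟩ with hi0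
  set σ0 : Fin (s+3) := C i0 ⟨2, by omega⟩ with hσ0
  have hpc2 : (pred i0 σ0).card = 2 := by
    rw [pred_card, hσ0, Equiv.symm_apply_apply]
  obtain ⟨τ0, ρ0, hτρ, hP0⟩ := Finset.card_eq_two.1 hpc2
  have hτ0p : τ0 ∈ pred i0 σ0 := by rw [hP0]; exact mem_insert_self _ _
  have hρ0p : ρ0 ∈ pred i0 σ0 := by rw [hP0]; simp
  have hτ0e : τ0 ∈ univ.erase σ0 := pred_subset i0 σ0 hτ0p
  have hρ0e : ρ0 ∈ univ.erase σ0 := pred_subset i0 σ0 hρ0p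
  have hVcard : 1 < ((univ.erase σ0) \ pred i0 σ0).card := by
    rw [card_sdiff_of_subset (pred_subset i0 σ0), card_erase_of_mem (mem_univ _), card_univ,
      Fintype.card_fin, hpc2]
    omega
  obtain ⟨π, hπ, π', hπ', hππ'⟩ := Finset.one_lt_card.1 hVcard
  have hπe : π ∈ univ.erase σ0 := (mem_sdiff.1 hπ).1
  have hπ'e : π' ∈ univ.erase σ0 := (mem_sdiff.1 hπ').1
  have hπτ0 : π ≠ τ0 := by
    intro h; exact absurd (h ▸ hτ0p) (mem_sdiff.1 hπ).2
  have hπρ0 : π ≠ ρ0 := by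
    intro h; exact absurd (h ▸ hρ0p) (mem_sdiff.1 hπ).2
  have hπ'τ0 : π' ≠ τ0 := by
    intro h; exact absurd (h ▸ hτ0p) (mem_sdiff.1 hπ').2
  have hπ'ρ0 : π' ≠ ρ0 := by
    intro h; exact absurd (h ▸ hρ0p) (mem_sdiff.1 hπ').2
  set nn : Finset (Fin (s+3)) → ℕ :=
    fun A => (univ.filter (fun i : Fin (s*(s+1)) => pred i σ0 = A)).card with hnn
  have hfib : ∀ S : Finset (Fin (s+3)),
      (univ.filter (fun i : Fin (s*(s+1)) => pred i σ0 ⊆ S)).card = ∑ A ∈ S.powerset, nn A := by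
    intro S
    rw [Finset.card_eq_sum_card_fiberwise
      (f := fun i : Fin (s*(s+1)) => pred i σ0) (t := S.powerset)
      (fun i hi => mem_powerset.2 (mem_filter.1 hi).2)]
    apply Finset.sum_congr rfl
    intro A hA
    congr 1
    ext i
    simp only [mem_filter, mem_univ, true_and]
    constructor
    · rintro ⟨_, h2⟩; exact h2
    · intro h2; exact ⟨h2 ▸ mem_powerset.1 hA, h2⟩
  have hpair : ∀ τ ρ : Fin (s+3), τ ≠ ρ → τ ∈ univ.erase σ0 → ρ ∈ univ.erase σ0 →
      nn ∅ + nn {ρ} + (nn {τ} + nn (insert τ {ρ})) = s - 2 + 2 := by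
    intro τ ρ hne hτ hρ
    have hS : (insert τ {ρ} : Finset (Fin (s+3))) ⊆ univ.erase σ0 := by
      intro x hx
      rcases mem_insert.1 hx with rfl | hx
      · exact hτ
      · rw [mem_singleton.1 hx]; exact hρ
    have hcard : (insert τ {ρ} : Finset (Fin (s+3))).card = 2 := card_pair hne
    have he := houter 2 (Or.inl rfl) σ0 (insert τ {ρ}) (mem_powersetCard.2 ⟨hS, hcard⟩)
    rw [hfib, sum_powerset_pair nn hne] at he
    exact he
  have htrip : ∀ τ ρ π1 : Fin (s+3), τ ≠ ρ → τ ≠ π1 → ρ ≠ π1 →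
      τ ∈ univ.erase σ0 → ρ ∈ univ.erase σ0 → π1 ∈ univ.erase σ0 →
      (nn ∅ + nn {π1} + (nn {ρ} + nn (insert ρ {π1})))
        + (nn {τ} + nn (insert τ {π1}) + (nn (insert τ {ρ}) + nn (insert τ (insert ρ {π1}))))
        = s - 2 + 3 := by
    intro τ ρ π1 h1 h2 h3 hτ hρ hπ1
    have hS : (insert τ (insert ρ {π1}) : Finset (Fin (s+3))) ⊆ univ.erase σ0 := by
      intro x hx
      rcases mem_insert.1 hx with rfl | hx
      · exact hτ
      rcases mem_insert.1 hx with rfl | hx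
      · exact hρ
      · rw [mem_singleton.1 hx]; exact hπ1
    have hcard : (insert τ (insert ρ {π1}) : Finset (Fin (s+3))).card = 3 := by
      rw [card_insert_of_notMem (by simp [h1, h2]), card_pair h3]
    have he := houter 3 (Or.inr rfl) σ0 _ (mem_powersetCard.2 ⟨hS, hcard⟩)
    rw [hfib, sum_powerset_triple nn h1 h2 h3] at he
    exact he
  have hmtr : 1 ≤ nn (insert τ0 {ρ0}) := by
    rw [hnn]
    refine card_pos.2 ⟨i0, mem_filter.2 ⟨mem_univ _, ?_⟩⟩
    exact hP0
  have e1 := hpair τ0 ρ0 hτρ hτ0e hρ0e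
  have e2 := hpair τ0 π (Ne.symm hπτ0) hτ0e hπe
  have e3 := hpair ρ0 π (Ne.symm hπρ0) hρ0e hπe
  have e4 := hpair τ0 π' (Ne.symm hπ'τ0) hτ0e hπ'e
  have e5 := hpair ρ0 π' (Ne.symm hπ'ρ0) hρ0e hπ'e
  have e6 := hpair π π' hππ' hπe hπ'e
  have t1 := htrip τ0 ρ0 π hτρ (Ne.symm hπτ0) (Ne.symm hπρ0) hτ0e hρ0e hπe
  have t2 := htrip τ0 ρ0 π' hτρ (Ne.symm hπ'τ0) (Ne.symm hπ'ρ0) hτ0e hρ0e hπ'e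
  omega

lemma step_down (N w t : ℕ) : SuitableCoreExists N (w+1) t → SuitableCoreExists N w t := by
  classical
  rintro ⟨C, hC⟩
  rcases Nat.eq_zero_or_pos w with rfl | hw
  · exact ⟨fun _ => 1, fun σ => σ.elim0⟩
  set p : Fin N → Fin w → Fin (w+1) := fun i σ => (C i).symm σ.castSucc with hp
  have hpinj : ∀ i : Fin N, Function.Injective (p i) := fun i a b h =>
    Fin.castSucc_injective w ((C i).symm.injective h)
  set q : Fin N → Fin w → ℕ :=
    fun i σ => (univ.filter (fun τ : Fin w => p i τ < p i σ)).card with hq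
  have hqlt : ∀ (i : Fin N) (σ : Fin w), q i σ < w := by
    intro i σ
    have hsub : (univ.filter (fun τ : Fin w => p i τ < p i σ)) ⊆ univ.erase σ := by
      intro τ hτ
      refine mem_erase.2 ⟨?_, mem_univ _⟩
      intro h; subst h; exact absurd (mem_filter.1 hτ).2 (lt_irrefl _)
    have h := card_le_card hsub
    rw [card_erase_of_mem (mem_univ _), card_univ, Fintype.card_fin] at h
    show (univ.filter (fun τ : Fin w => p i τ < p i σ)).card < w
    omega
  have hmono : ∀ (i : Fin N) (σ τ : Fin w), p i σ < p i τ → q i σ < q i τ := by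
    intro i σ τ h
    apply card_lt_card
    refine (Finset.ssubset_iff_of_subset (fun x hx => mem_filter.2
      ⟨mem_univ _, lt_trans (mem_filter.1 hx).2 h⟩)).2
      ⟨σ, mem_filter.2 ⟨mem_univ _, h⟩, fun hx => absurd (mem_filter.1 hx).2 (lt_irrefl _)⟩
  have hiff : ∀ (i : Fin N) (σ τ : Fin w), q i σ < q i τ ↔ p i σ < p i τ := by
    intro i σ τ
    constructor
    · intro h
      rcases lt_trichotomy (p i σ) (p i τ) with h1 | h1 | h1
      · exact h1
      · have := hpinj i h1; subst this; omega
      · have := hmono i τ σ h1; omega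
    · exact hmono i σ τ
  have hqinj : ∀ i : Fin N, Function.Injective (fun σ => (⟨q i σ, hqlt i σ⟩ : Fin w)) := by
    intro i a b h
    have hv : q i a = q i b := congrArg Fin.val h
    by_contra hne
    rcases lt_trichotomy (p i a) (p i b) with h1 | h1 | h1
    · have := hmono i a b h1; omega
    · exact hne (hpinj i h1)
    · have := hmono i b a h1; omega
  set D : Fin N → Equiv.Perm (Fin w) := fun i =>
    (Equiv.ofBijective _ (Finite.injective_iff_bijective.1 (hqinj i))).symm with hD
  have hD2 : ∀ (i : Fin N) (σ' : Fin w), (D i).symm σ' = ⟨q i σ', hqlt i σ'⟩ := fun i σ' => rfl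
  refine ⟨D, ?_⟩
  intro σ T hσT hT
  set T' : Finset (Fin (w+1)) := T.image Fin.castSucc with hT'
  have hcard' : T'.card = T.card := card_image_of_injective _ (Fin.castSucc_injective w)
  have hσT' : σ.castSucc ∉ T' := by
    rw [hT']
    intro h
    obtain ⟨x, hx, hxe⟩ := mem_image.1 h
    exact hσT ((Fin.castSucc_injective w hxe) ▸ hx)
  have h := hC σ.castSucc T' hσT' (by rw [hcard']; exact hT)
  rw [hcard'] at h
  refine le_trans h (le_of_eq ?_)
  apply Finset.card_bij (fun i _ => i)  -- identity; easier: congr on filters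
  · intro i hi
    refine mem_filter.2 ⟨mem_univ _, ?_⟩
    intro τ hτ
    have hall := (mem_filter.1 hi).2
    rw [hD2, hD2]
    exact Fin.mk_lt_mk.2 ((hiff i σ τ).2 (hall τ.castSucc (mem_image_of_mem _ hτ)))
  · intro a b _ _ hab; exact hab
  · intro i hi
    refine ⟨i, ?_, rfl⟩
    refine mem_filter.2 ⟨mem_univ _, ?_⟩
    intro τ' hτ'
    obtain ⟨τ, hτT, rfl⟩ := mem_image.1 hτ'
    have hall := (mem_filter.1 hi).2
    have h2 := hall τ hτT
    rw [hD2, hD2] at h2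
    exact (hiff i σ τ).1 (Fin.mk_lt_mk.1 h2)

theorem part2 (s : ℕ) (hs : 2 ≤ s) :
    ∀ w : ℕ, s + 3 ≤ w → ¬ SuitableCoreExists (s * (s + 1)) w (2 * s) := by
  intro w hw
  induction w, hw using Nat.le_induction with
  | base => exact part2core s hs
  | succ w hw ih => exact fun hex => ih (step_down _ _ _ hex)


/-- `SCN(2s, s(s+1)) = s+2` for all `s ≥ 2`. -/
theorem stmt19 (s : ℕ) (hs : 2 ≤ s) :
    SuitableCoreExists (s * (s + 1)) (s + 2) (2 * s) ∧
    ∀ w : ℕ, s + 3 ≤ w → ¬ SuitableCoreExists (s * (s + 1)) w (2 * s) := by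
  exact ⟨part1 s hs, part2 s hs⟩
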